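/- Let φ : ℝ → ℝ be Lipschitz with constant K > 0 and 1-periodic, let p, q be coprime with q ≥ 1, and suppose the function A_q(φ)(x) = (1/q)·Σ_{k=0}^{q−1} φ(x + k·p/q) is constant on ℝ. Then γ^l_{p/q}(a) = p/q − M(φ)·a + o(a) and γ^r_{p/q}(a) = p/q − M(φ)·a + o(a) as a → 0; that is, lim_{a→0} (γ^l_{p/q}(a) − p/q)/a = lim_{a→0} (γ^r_{p/q}(a) − p/q)/a = −∫₀¹ φ(x) dx. -/

import Mathlib

/-!
`F_{t,a}` lifts an orientation-preserving circle homeomorphism, so `Trans(F_{t,a}) = p/q` exactly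
when some orbit closes up, `F^q x = x + p`, i.e. `q t + a ∑_{j<q} φ(F^j x) = p`. This forces
`t = p/q + O(a)`, so the first `q` orbit points stay within `O(a)` of the rigid rotation
`x + j p/q`, and the Lipschitz bound gives
`∑_{j<q} φ(F^j x) = ∑_{j<q} φ(x + j p/q) + O(a) = q M(φ) + O(a)`;
the last equality holds because `A_q(φ)` is constant, hence equal to its mean `M(φ)`.
So the whole fibre lies within `O(a²)` of `p/q - a M(φ)`, and it is nonempty by the
intermediate value theorem in `t`.
-/

open Filter Topology Set

/-- `τ` is the translation number of `F`: for every `x`, `(F^[n] x - x)/n → τ`. -/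
def IsTransNum (F : ℝ → ℝ) (τ : ℝ) : Prop :=
  ∀ x : ℝ, Filter.Tendsto (fun n : ℕ => (F^[n] x - x) / n) Filter.atTop (nhds τ)

/-- The average `A_q(φ)` of the translates of `φ` by `p/q`. -/
noncomputable def avgA (φ : ℝ → ℝ) (p : ℤ) (q : ℕ) (x : ℝ) : ℝ :=
  (1 / (q : ℝ)) * ∑ k ∈ Finset.range q, φ (x + (k : ℝ) * (p : ℝ) / (q : ℝ))

open scoped NNReal

theorem IsTransNum.eq_translationNumber {f : CircleDeg1Lift} {τ : ℝ} (h : IsTransNum f τ) :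
    τ = f.translationNumber :=
  tendsto_nhds_unique (h 0) <| by
    simpa only [CircleDeg1Lift.coe_pow] using f.tendsto_translationNumber 0

theorem IsTransNum.eq_div_iff_exists_iterate {f : CircleDeg1Lift} (hf : Continuous f) {τ : ℝ}
    (h : IsTransNum f τ) {m : ℤ} {n : ℕ} (hn : 0 < n) :
    τ = m / n ↔ ∃ x, f^[n] x = x + m := by
  rw [h.eq_translationNumber, f.translationNumber_eq_rat_iff hf hn, CircleDeg1Lift.coe_pow]

section PerturbedShift

variable {φ : ℝ → ℝ} {K : ℝ≥0} {M t a : ℝ}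

noncomputable def perturbedShift (φ : ℝ → ℝ) (t a : ℝ) : ℝ → ℝ :=
  fun x => x + t + a * φ x

theorem perturbedShift_iterate (φ : ℝ → ℝ) (t a x : ℝ) (n : ℕ) :
    (perturbedShift φ t a)^[n] x
      = x + n * t + a * ∑ j ∈ Finset.range n, φ ((perturbedShift φ t a)^[j] x) := by
  induction n with
  | zero => simp
  | succ n ih =>
    rw [Function.iterate_succ_apply', perturbedShift, ih, Finset.sum_range_succ, ih]
    push_cast
    ring

theorem abs_perturbedShift_iterate_sub_le (hM : ∀ x, |φ x| ≤ M) (t a x : ℝ) (n : ℕ) :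
    |(perturbedShift φ t a)^[n] x - x - n * t| ≤ n * (|a| * M) :=
  calc |(perturbedShift φ t a)^[n] x - x - n * t|
      = |a| * |∑ j ∈ Finset.range n, φ ((perturbedShift φ t a)^[j] x)| := by
        rw [perturbedShift_iterate, ← abs_mul]; ring_nf
    _ ≤ |a| * ∑ _j ∈ Finset.range n, M := by
        gcongr
        exact (Finset.abs_sum_le_sum_abs _ _).trans (Finset.sum_le_sum fun j _ => hM _)
    _ = n * (|a| * M) := by simp only [Finset.sum_const, Finset.card_range, nsmul_eq_mul]; ring

theorem continuous_perturbedShift_iterate_param (hφ : Continuous φ) (a x : ℝ) (n : ℕ) :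
    Continuous fun t => (perturbedShift φ t a)^[n] x := by
  induction n with
  | zero => exact continuous_const
  | succ n ih =>
    simp only [Function.iterate_succ_apply', perturbedShift]
    fun_prop

theorem exists_circleDeg1Lift_perturbedShift (hφ : LipschitzWith K φ)
    (hper : Function.Periodic φ 1) (ha : |a| * K ≤ 1) (t : ℝ) :
    ∃ f : CircleDeg1Lift, ⇑f = perturbedShift φ t a := by
  refine ⟨⟨⟨perturbedShift φ t a, fun x y hxy => ?_⟩, fun x => ?_⟩, rfl⟩
  · have hdiff : a * (φ x - φ y) ≤ |a| * (K * (y - x)) := by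
      rw [← abs_of_nonneg (sub_nonneg.2 hxy), abs_sub_comm y x]
      refine (le_abs_self _).trans ?_
      rw [abs_mul]
      gcongr
      simpa [Real.dist_eq] using hφ.dist_le_mul x y
    simp only [perturbedShift]
    nlinarith [mul_nonneg (sub_nonneg.2 ha) (sub_nonneg.2 hxy)]
  · simp only [perturbedShift, hper x]
    ring

theorem exists_perturbedShift_iterate_eq (hφ : Continuous φ) (hM : ∀ x, |φ x| ≤ M) (a : ℝ)
    (p : ℤ) {q : ℕ} (hq : 0 < q) : ∃ t, (perturbedShift φ t a)^[q] 0 = 0 + p := by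
  have hqp : (q : ℝ) * (p / q) = p := mul_div_cancel₀ _ (by positivity)
  have hbound t := abs_le.1 (by simpa using abs_perturbedShift_iterate_sub_le hM t a 0 q)
  obtain ⟨t, ht⟩ := intermediate_value_univ (p / q - |a| * M) (p / q + |a| * M)
    (continuous_perturbedShift_iterate_param hφ a 0 q)
    (show (p : ℝ) ∈ Set.Icc _ _ from
      ⟨by linarith [(hbound (p / q - |a| * M)).2], by linarith [(hbound (p / q + |a| * M)).1]⟩)
  exact ⟨t, by simpa using ht⟩

theorem IsTransNum.perturbedShift_eq_div_iff (hφ : LipschitzWith K φ)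
    (hper : Function.Periodic φ 1) (ha : |a| * K ≤ 1) {τ : ℝ}
    (h : IsTransNum (perturbedShift φ t a) τ) {m : ℤ} {n : ℕ} (hn : 0 < n) :
    τ = m / n ↔ ∃ x, (perturbedShift φ t a)^[n] x = x + m := by
  obtain ⟨f, hf⟩ := exists_circleDeg1Lift_perturbedShift hφ hper ha t
  rw [← hf] at h ⊢
  refine h.eq_div_iff_exists_iterate ?_ hn
  rw [hf]
  exact continuous_id.add continuous_const |>.add (continuous_const.mul hφ.continuous)

theorem abs_sub_div_le_of_perturbedShift_iterate_eq (hM : ∀ x, |φ x| ≤ M) {p : ℤ} {q : ℕ}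
    (hq : 0 < q) {x : ℝ} (hfix : (perturbedShift φ t a)^[q] x = x + p) : |t - p / q| ≤ |a| * M := by
  have hq' : (0 : ℝ) < q := by exact_mod_cast hq
  have h := abs_perturbedShift_iterate_sub_le hM t a x q
  rw [hfix, show x + p - x - q * t = -(q * (t - p / q)) by field_simp; ring, abs_neg, abs_mul,
    abs_of_pos hq'] at h
  exact le_of_mul_le_mul_left h hq'

theorem abs_perturbedShift_iterate_sub_rotation_le (hM : ∀ x, |φ x| ≤ M) {p : ℤ} {q : ℕ}
    (hq : 0 < q) {x : ℝ} (hfix : (perturbedShift φ t a)^[q] x = x + p) (j : ℕ) :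
    |(perturbedShift φ t a)^[j] x - (x + j * p / q)| ≤ j * (2 * |a| * M) :=
  calc |(perturbedShift φ t a)^[j] x - (x + j * p / q)|
      = |((perturbedShift φ t a)^[j] x - x - j * t) + j * (t - p / q)| := by ring_nf
    _ ≤ j * (|a| * M) + j * (|a| * M) := by
        refine (abs_add_le _ _).trans
          (add_le_add (abs_perturbedShift_iterate_sub_le hM t a x j) ?_)
        rw [abs_mul, Nat.abs_cast]
        gcongr
        exact abs_sub_div_le_of_perturbedShift_iterate_eq hM hq hfix
    _ = j * (2 * |a| * M) := by ring

theorem abs_sub_div_add_mul_le_of_perturbedShift_iterate_eq (hφ : LipschitzWith K φ)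
    (hM : ∀ x, |φ x| ≤ M) {p : ℤ} {q : ℕ} (hq : 0 < q) {c : ℝ} (havg : ∀ x, avgA φ p q x = c)
    {x : ℝ} (hfix : (perturbedShift φ t a)^[q] x = x + p) :
    |t - p / q + a * c| ≤ 2 * K * q * M * a ^ 2 := by
  have hq' : (0 : ℝ) < q := by exact_mod_cast hq
  set err := ∑ j ∈ Finset.range q,
    (φ ((perturbedShift φ t a)^[j] x) - φ (x + j * p / q))
  have herr : |err| ≤ q * (K * (q * (2 * |a| * M))) := by
    refine (Finset.abs_sum_le_sum_abs _ _).trans ?_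
    refine (Finset.sum_le_sum fun j hj => ?_).trans
      (by rw [Finset.sum_const, Finset.card_range, nsmul_eq_mul])
    rw [← Real.dist_eq]
    refine (hφ.dist_le_mul _ _).trans ?_
    rw [Real.dist_eq]
    gcongr
    refine (abs_perturbedShift_iterate_sub_rotation_le hM hq hfix j).trans ?_
    have : 0 ≤ M := (abs_nonneg _).trans (hM 0)
    gcongr
    exact_mod_cast (Finset.mem_range.1 hj).le
  -- `A_q(φ) ≡ c` turns the periodic-orbit relation `q t + a ∑ φ(F^j x) = p` into this identity.
  have hkey : q * (t - p / q + a * c) = -(a * err) := by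
    have horbit := perturbedShift_iterate φ t a x q
    have hsum : ∑ j ∈ Finset.range q, φ (x + j * p / q) = q * c := by
      rw [← havg x, avgA, ← mul_assoc, mul_one_div_cancel hq'.ne', one_mul]
    rw [hfix] at horbit
    simp only [err, Finset.sum_sub_distrib, hsum]
    field_simp
    linarith
  have habs := congrArg abs hkey
  rw [abs_mul, abs_of_pos hq', abs_neg, abs_mul] at habs
  refine le_of_mul_le_mul_left ?_ hq'
  calc q * |t - p / q + a * c| = |a| * |err| := habs
    _ ≤ |a| * (q * (K * (q * (2 * |a| * M)))) := by gcongr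
    _ = q * (2 * K * q * M * a ^ 2) := by rw [← sq_abs a]; ring

end PerturbedShift

theorem integral_avgA {φ : ℝ → ℝ} (hφ : Continuous φ) (hper : Function.Periodic φ 1) (p : ℤ)
    {q : ℕ} (hq : q ≠ 0) : ∫ x in (0 : ℝ)..1, avgA φ p q x = ∫ x in (0 : ℝ)..1, φ x := by
  have htranslate (s : ℝ) : ∫ x in (0 : ℝ)..1, φ (x + s) = ∫ x in (0 : ℝ)..1, φ x := by
    simpa [intervalIntegral.integral_comp_add_right, add_comm] using
      hper.intervalIntegral_add_eq s 0
  simp only [avgA]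
  rw [intervalIntegral.integral_const_mul, intervalIntegral.integral_finsetSum
    fun k _ => by exact (hφ.comp (continuous_add_const _)).intervalIntegrable 0 1]
  simp only [htranslate, Finset.sum_const, Finset.card_range, nsmul_eq_mul]
  field_simp

theorem avgA_eq_integral_of_forall_eq {φ : ℝ → ℝ} (hφ : Continuous φ)
    (hper : Function.Periodic φ 1) (p : ℤ) {q : ℕ} (hq : q ≠ 0)
    (hconst : ∀ x y, avgA φ p q x = avgA φ p q y) (x : ℝ) :
    avgA φ p q x = ∫ y in (0 : ℝ)..1, φ y := by
  rw [← integral_avgA hφ hper p hq]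
  simp [hconst _ x]

theorem abs_csInf_sub_le_and_abs_csSup_sub_le {S : Set ℝ} {c ε : ℝ} (hne : S.Nonempty)
    (h : ∀ t ∈ S, |t - c| ≤ ε) : |sInf S - c| ≤ ε ∧ |sSup S - c| ≤ ε := by
  obtain ⟨t₀, ht₀⟩ := hne
  have hlower t (ht : t ∈ S) : c - ε ≤ t := by linarith [(abs_le.1 (h t ht)).1]
  have hupper t (ht : t ∈ S) : t ≤ c + ε := by linarith [(abs_le.1 (h t ht)).2]
  refine ⟨abs_le.2 ⟨?_, ?_⟩, abs_le.2 ⟨?_, ?_⟩⟩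
  · linarith [le_csInf ⟨t₀, ht₀⟩ hlower]
  · linarith [csInf_le ⟨c - ε, hlower⟩ ht₀, hupper t₀ ht₀]
  · linarith [le_csSup ⟨c + ε, hupper⟩ ht₀, hlower t₀ ht₀]
  · linarith [csSup_le ⟨t₀, ht₀⟩ hupper]

theorem tendsto_sub_div_of_abs_sub_le_sq {f : ℝ → ℝ} {r c C : ℝ}
    (h : ∀ᶠ a in 𝓝 0, |f a - (r - a * c)| ≤ C * a ^ 2) :
    Tendsto (fun a => (f a - r) / a) (𝓝[≠] 0) (𝓝 (-c)) := by
  have hrem : Tendsto (fun a => (f a - (r - a * c)) / a) (𝓝[≠] 0) (𝓝 0) := by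
    have hcont : Continuous fun a : ℝ => C * |a| := continuous_const.mul continuous_abs
    refine squeeze_zero_norm' ?_
      (tendsto_nhdsWithin_of_tendsto_nhds (hcont.tendsto' 0 0 (by simp)))
    filter_upwards [nhdsWithin_le_nhds h, self_mem_nhdsWithin] with a ha ha0
    rw [Real.norm_eq_abs, abs_div, div_le_iff₀ (abs_pos.2 ha0), mul_assoc, ← sq, sq_abs]
    exact ha
  have hlim : Tendsto (fun a => -c + (f a - (r - a * c)) / a) (𝓝[≠] 0) (𝓝 (-c)) := by
    simpa using hrem.const_add (-c)
  refine hlim.congr' ?_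
  filter_upwards [self_mem_nhdsWithin] with a (ha : a ≠ 0)
  field_simp
  ring

theorem stmt_12_general (φ : ℝ → ℝ) (K : ℝ) (hK : 0 < K)
    (hLip : ∀ x y : ℝ, |φ x - φ y| ≤ K * |x - y|)
    (hper : ∀ x : ℝ, φ (x + 1) = φ x)
    (τ : ℝ → ℝ → ℝ)
    (hτ : ∀ t : ℝ, ∀ a ∈ Set.Ioo (-(1 / K)) (1 / K),
      IsTransNum (fun x => x + t + a * φ x) (τ t a))
    (p : ℤ) (q : ℕ) (hq : 1 ≤ q)
    (hconst : ∀ x y : ℝ, avgA φ p q x = avgA φ p q y) :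
    Filter.Tendsto
      (fun a : ℝ => (sInf {t : ℝ | τ t a = (p : ℝ) / (q : ℝ)} - (p : ℝ) / (q : ℝ)) / a)
      (nhdsWithin 0 {0}ᶜ) (nhds (-∫ x in (0 : ℝ)..1, φ x)) ∧
    Filter.Tendsto
      (fun a : ℝ => (sSup {t : ℝ | τ t a = (p : ℝ) / (q : ℝ)} - (p : ℝ) / (q : ℝ)) / a)
      (nhdsWithin 0 {0}ᶜ) (nhds (-∫ x in (0 : ℝ)..1, φ x)) := by
  have hφ : LipschitzWith K.toNNReal φ :=
    LipschitzWith.of_dist_le' fun x y => by simpa only [Real.dist_eq] using hLip x y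
  obtain ⟨M, hM⟩ : ∃ M, ∀ x, |φ x| ≤ M :=
    (Function.Periodic.isBounded_of_continuous hper one_ne_zero hφ.continuous).exists_norm_le.imp
      fun M hM x => hM _ (mem_range_self x)
  have havg := avgA_eq_integral_of_forall_eq hφ.continuous hper p (by omega) hconst
  have hfiber : ∀ a ∈ Ioo (-(1 / K)) (1 / K), {t | τ t a = p / q}.Nonempty ∧
      ∀ t ∈ {t | τ t a = p / q},
        |t - (p / q - a * ∫ x in (0 : ℝ)..1, φ x)| ≤ 2 * K.toNNReal * q * M * a ^ 2 := by
    intro a ha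
    have haK : |a| * K.toNNReal ≤ 1 := by
      rw [Real.coe_toNNReal K hK.le, ← le_div_iff₀ hK]
      exact (abs_lt.2 ha).le
    have hrat t : τ t a = p / q ↔ ∃ x, (perturbedShift φ t a)^[q] x = x + p :=
      (hτ t a ha).perturbedShift_eq_div_iff hφ hper haK hq
    refine ⟨?_, fun t ht => ?_⟩
    · obtain ⟨t, ht⟩ := exists_perturbedShift_iterate_eq hφ.continuous hM a p hq
      exact ⟨t, (hrat t).2 ⟨0, ht⟩⟩
    · obtain ⟨x, hx⟩ := (hrat t).1 ht
      rw [sub_sub_eq_add_sub, add_sub_right_comm]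
      exact abs_sub_div_add_mul_le_of_perturbedShift_iterate_eq hφ hM hq havg hx
  have hsmall : ∀ᶠ a in 𝓝 0, a ∈ Ioo (-(1 / K)) (1 / K) :=
    Ioo_mem_nhds (by simpa using hK) (by positivity)
  have hextremes a (ha : a ∈ Ioo (-(1 / K)) (1 / K)) :=
    abs_csInf_sub_le_and_abs_csSup_sub_le (hfiber a ha).1 (hfiber a ha).2
  exact ⟨tendsto_sub_div_of_abs_sub_le_sq (hsmall.mono fun a ha => (hextremes a ha).1),
    tendsto_sub_div_of_abs_sub_le_sq (hsmall.mono fun a ha => (hextremes a ha).2)⟩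

theorem stmt_12 (φ : ℝ → ℝ) (K : ℝ) (hK : 0 < K)
    (hLip : ∀ x y : ℝ, |φ x - φ y| ≤ K * |x - y|)
    (hper : ∀ x : ℝ, φ (x + 1) = φ x)
    (τ : ℝ → ℝ → ℝ)
    (hτ : ∀ t : ℝ, ∀ a ∈ Set.Ioo (-(1 / K)) (1 / K),
      IsTransNum (fun x => x + t + a * φ x) (τ t a))
    (p : ℤ) (q : ℕ) (hq : 1 ≤ q) (hpq : Nat.Coprime p.natAbs q)
    (hconst : ∀ x y : ℝ, avgA φ p q x = avgA φ p q y) :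
    Filter.Tendsto
      (fun a : ℝ => (sInf {t : ℝ | τ t a = (p : ℝ) / (q : ℝ)} - (p : ℝ) / (q : ℝ)) / a)
      (nhdsWithin 0 {0}ᶜ) (nhds (-∫ x in (0 : ℝ)..1, φ x)) ∧
    Filter.Tendsto
      (fun a : ℝ => (sSup {t : ℝ | τ t a = (p : ℝ) / (q : ℝ)} - (p : ℝ) / (q : ℝ)) / a)
      (nhdsWithin 0 {0}ᶜ) (nhds (-∫ x in (0 : ℝ)..1, φ x)) :=
  stmt_12_general φ K hK hLip hper τ hτ p q hq hconst
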